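/- arXiv:1308.5625 — 4 statements merged into one kernel-verified Lean document; each statement's English description precedes it below -/
import Mathlib

section
/- Let c > 0 and k ∈ ℕ with k > c/e. Then ∑_{m > k} (c/m)^m ≤ (c/k)^k · 1/(1 + log(k/c)). -/
open Real

private lemma aux1 (c x y : ℝ) (hc : 0 < c) (hx : 0 < x) (hxy : x ≤ y) :
    y * Real.log (c / y) ≤ x * Real.log (c / x) + (y - x) * (Real.log (c / x) - 1) := by
  have hy : 0 < y := lt_of_lt_of_le hx hxy
  have h1 : Real.log (c / y) = Real.log (c / x) + Real.log (x / y) := by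
    rw [← Real.log_mul (by positivity) (by positivity)]
    congr 1
    field_simp
  have h2 : Real.log (x / y) ≤ x / y - 1 := Real.log_le_sub_one_of_pos (by positivity)
  have h3 : y * Real.log (x / y) ≤ x - y := by
    calc y * Real.log (x / y) ≤ y * (x / y - 1) := by nlinarith
    _ = x - y := by field_simp
  rw [h1]
  nlinarith

theorem stmt1 (c : ℝ) (hc : 0 < c) (k : ℕ) (hk : c / Real.exp 1 < k) :
    (∑' m : {m : ℕ // k < m}, (c / (m : ℝ)) ^ (m.1 : ℝ)) ≤
      (c / k) ^ (k : ℝ) * (1 / (1 + Real.log (k / c))) := by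
  have he : (0:ℝ) < Real.exp 1 := Real.exp_pos 1
  have hk0 : 0 < (k:ℝ) := lt_trans (div_pos hc he) hk
  have hcke : c < k * Real.exp 1 := by
    have := (div_lt_iff₀ he).mp hk
    linarith
  set q : ℝ := c / (k * Real.exp 1) with hq
  have hq0 : 0 < q := div_pos hc (by positivity)
  have hq1 : q < 1 := (div_lt_one (by positivity)).mpr hcke
  have hlogq : Real.log q = Real.log (c / k) - 1 := by
    rw [hq, Real.log_div hc.ne' (by positivity), Real.log_mul hk0.ne' he.ne',
      Real.log_exp, Real.log_div hc.ne' hk0.ne']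
    ring
  -- termwise bound
  have key : ∀ m : ℕ, k < m →
      (c / (m : ℝ)) ^ (m : ℝ) ≤ (c / k) ^ (k : ℝ) * q ^ (m - k) := by
    intro m hm
    have hm0 : 0 < (m:ℝ) := by exact_mod_cast Nat.zero_lt_of_lt hm
    have hmk : ((m - k : ℕ) : ℝ) = (m:ℝ) - k := by
      push_cast [Nat.cast_sub hm.le]
      ring
    rw [Real.rpow_def_of_pos (by positivity), Real.rpow_def_of_pos (by positivity),
      ← Real.exp_log (pow_pos hq0 (m - k)), Real.log_pow, ← Real.exp_add]
    apply Real.exp_le_exp.mpr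
    rw [hlogq, hmk]
    have := aux1 c (k:ℝ) (m:ℝ) hc hk0 (by exact_mod_cast hm.le)
    nlinarith [this]
  -- reindexing equivalence
  let e : ℕ ≃ {m : ℕ // k < m} :=
    { toFun := fun j => ⟨k + 1 + j, by omega⟩
      invFun := fun m => m.1 - (k + 1)
      left_inv := fun j => by simp
      right_inv := fun m => Subtype.ext (by have := m.2; simp; omega) }
  have htsum : (∑' m : {m : ℕ // k < m}, (c / (m : ℝ)) ^ (m.1 : ℝ))
      = ∑' j : ℕ, (c / ((k + 1 + j : ℕ) : ℝ)) ^ ((k + 1 + j : ℕ) : ℝ) := by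
    rw [← e.tsum_eq]
    rfl
  have hbound : ∀ j : ℕ,
      (c / ((k + 1 + j : ℕ) : ℝ)) ^ ((k + 1 + j : ℕ) : ℝ)
        ≤ (c / k) ^ (k : ℝ) * q ^ (j + 1) := by
    intro j
    have := key (k + 1 + j) (by omega)
    have h2 : k + 1 + j - k = j + 1 := by omega
    rwa [h2] at this
  have hsumg : Summable (fun j : ℕ => (c / k) ^ (k : ℝ) * q ^ (j + 1)) := by
    apply Summable.mul_left
    exact (summable_geometric_of_lt_one hq0.le hq1).comp_injective (add_left_injective 1)
  have hsumf : Summable (fun j : ℕ =>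
      (c / ((k + 1 + j : ℕ) : ℝ)) ^ ((k + 1 + j : ℕ) : ℝ)) := by
    apply Summable.of_nonneg_of_le (fun j => by positivity) hbound hsumg
  have hgeom : (∑' j : ℕ, (c / k) ^ (k : ℝ) * q ^ (j + 1))
      = (c / k) ^ (k : ℝ) * (q * (1 - q)⁻¹) := by
    rw [tsum_mul_left]
    congr 1
    simp only [pow_succ, mul_comm _ q]
    rw [tsum_mul_left, tsum_geometric_of_lt_one hq0.le hq1]
  have hL : -1 < Real.log ((k:ℝ) / c) := by
    rw [Real.lt_log_iff_exp_lt (by positivity), Real.exp_neg, inv_eq_one_div,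
      div_lt_div_iff₀ he hc]
    nlinarith
  have hfinal : q * (1 - q)⁻¹ ≤ 1 / (1 + Real.log ((k:ℝ) / c)) := by
    have hke : 0 < (k:ℝ) * Real.exp 1 - c := by linarith
    have h1q : 1 - q = ((k:ℝ) * Real.exp 1 - c) / ((k:ℝ) * Real.exp 1) := by
      rw [hq]
      field_simp
    have hqv : q * (1 - q)⁻¹ = c / ((k:ℝ) * Real.exp 1 - c) := by
      rw [h1q, hq]
      field_simp
    rw [hqv, div_le_div_iff₀ hke (by linarith)]
    have hlog : Real.log ((k:ℝ) / c * Real.exp 1) ≤ (k:ℝ) / c * Real.exp 1 - 1 :=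
      Real.log_le_sub_one_of_pos (by positivity)
    rw [Real.log_mul (by positivity) he.ne', Real.log_exp] at hlog
    have : c * Real.log ((k:ℝ)/c) ≤ (k:ℝ) * Real.exp 1 - 2 * c := by
      have := mul_le_mul_of_nonneg_left hlog hc.le
      have hrw : c * ((k:ℝ) / c * Real.exp 1) = (k:ℝ) * Real.exp 1 := by field_simp
      nlinarith
    nlinarith
  calc (∑' m : {m : ℕ // k < m}, (c / (m : ℝ)) ^ (m.1 : ℝ))
      = ∑' j : ℕ, (c / ((k + 1 + j : ℕ) : ℝ)) ^ ((k + 1 + j : ℕ) : ℝ) := htsum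
    _ ≤ ∑' j : ℕ, (c / k) ^ (k : ℝ) * q ^ (j + 1) := Summable.tsum_le_tsum hbound hsumf hsumg
    _ = (c / k) ^ (k : ℝ) * (q * (1 - q)⁻¹) := hgeom
    _ ≤ (c / k) ^ (k : ℝ) * (1 / (1 + Real.log (k / c))) := by
        apply mul_le_mul_of_nonneg_left hfinal (by positivity)
end

section
/- For c > 0, k > c/e an integer, and any x > 1: ∫_k^∞ (c/t)^t dt ≤ e^{x·c/e} · x^{-k} / log x. -/
/-!
Write `(c/t)^t = (x c/t)^t · x^{-t}`. Since `log y ≤ y/e`, the first factor satisfies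
`(a/t)^t = exp (t log (a/t)) ≤ exp (a/e)` with `a = x c`, so the integrand is dominated by
`exp (x c/e) · x^{-t}`, whose integral over `(k, ∞)` is `exp (x c/e) · x^{-k} / log x`.
-/

open MeasureTheory Real Set

lemma Real.log_le_div_exp_one {y : ℝ} (hy : 0 < y) : log y ≤ y / exp 1 := by
  have h := log_le_sub_one_of_pos (div_pos hy (exp_pos 1))
  rw [log_div hy.ne' (exp_pos 1).ne', log_exp] at h
  linarith

lemma Real.div_rpow_self_le_exp {a t : ℝ} (ha : 0 < a) (ht : 0 < t) :
    (a / t) ^ t ≤ exp (a / exp 1) := by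
  rw [rpow_def_of_pos (div_pos ha ht), exp_le_exp]
  calc log (a / t) * t ≤ a / t / exp 1 * t := by
        gcongr; exact log_le_div_exp_one (div_pos ha ht)
    _ = a / exp 1 := by field_simp

lemma Real.div_rpow_self_le_exp_mul_rpow_neg {c t x : ℝ} (hc : 0 < c) (ht : 0 < t) (hx : 0 < x) :
    (c / t) ^ t ≤ exp (x * c / exp 1) * x ^ (-t) := by
  have hsplit : (c / t) ^ t = (x * c / t) ^ t * x ^ (-t) := by
    rw [mul_div_assoc, mul_rpow hx.le (div_pos hc ht).le, mul_comm, ← mul_assoc,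
      ← rpow_add hx, neg_add_cancel, rpow_zero, one_mul]
  rw [hsplit]
  gcongr
  exact div_rpow_self_le_exp (mul_pos hx hc) ht

lemma Real.rpow_neg_eq_exp_mul {x : ℝ} (hx : 0 < x) (t : ℝ) : x ^ (-t) = exp (-log x * t) := by
  rw [rpow_def_of_pos hx, neg_mul_comm]

lemma integrableOn_rpow_neg_Ioi {x : ℝ} (hx : 1 < x) (a : ℝ) :
    IntegrableOn (fun t : ℝ => x ^ (-t)) (Ioi a) := by
  simp_rw [rpow_neg_eq_exp_mul (zero_lt_one.trans hx)]
  exact integrableOn_exp_mul_Ioi (neg_neg_of_pos (log_pos hx)) a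

lemma integral_rpow_neg_Ioi {x : ℝ} (hx : 1 < x) (a : ℝ) :
    ∫ t in Ioi a, x ^ (-t) = x ^ (-a) / log x := by
  simp_rw [rpow_neg_eq_exp_mul (zero_lt_one.trans hx)]
  rw [integral_exp_mul_Ioi (neg_neg_of_pos (log_pos hx)), div_neg, neg_div, neg_neg]

theorem stmt3_general (c : ℝ) (hc : 0 < c) (k : ℕ)
    (x : ℝ) (hx : 1 < x) :
    (∫ t in Set.Ici (k : ℝ), (c / t) ^ t) ≤
      Real.exp (x * c / Real.exp 1) * x ^ (-(k : ℝ)) / Real.log x := by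
  have hpos : ∀ t ∈ Ioi (k : ℝ), 0 < t := fun t ht => (Nat.cast_nonneg k).trans_lt ht
  calc (∫ t in Ici (k : ℝ), (c / t) ^ t) = ∫ t in Ioi (k : ℝ), (c / t) ^ t :=
        integral_Ici_eq_integral_Ioi
    _ ≤ ∫ t in Ioi (k : ℝ), exp (x * c / exp 1) * x ^ (-t) := by
        refine integral_mono_of_nonneg ?_ ((integrableOn_rpow_neg_Ioi hx _).const_mul _) ?_
        · exact ae_restrict_of_forall_mem measurableSet_Ioi fun t ht =>
            rpow_nonneg (div_pos hc (hpos t ht)).le t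
        · exact ae_restrict_of_forall_mem measurableSet_Ioi fun t ht =>
            div_rpow_self_le_exp_mul_rpow_neg hc (hpos t ht) (zero_lt_one.trans hx)
    _ = exp (x * c / exp 1) * x ^ (-(k : ℝ)) / log x := by
        rw [integral_const_mul, integral_rpow_neg_Ioi hx, ← mul_div_assoc]

theorem stmt3 (c : ℝ) (hc : 0 < c) (k : ℕ) (hk : c / Real.exp 1 < k)
    (x : ℝ) (hx : 1 < x) :
    (∫ t in Set.Ici (k : ℝ), (c / t) ^ t) ≤
      Real.exp (x * c / Real.exp 1) * x ^ (-(k : ℝ)) / Real.log x :=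
  stmt3_general c hc k x hx
end

section
/- Under the assumptions of the previous statement, the linear operator L(X) = A X B^H is injective, and its Moore–Penrose pseudo-inverse is given explicitly by L†(V) = (1/(N_s N_r)) · A^H V B D^{−1}; in particular L†(L(X)) = X for every X ∈ ℂ^{(2K+1)×(2K+1)}. -/
/-!
Since `Aᴴ A = N_s I` and `Bᴴ B D⁻¹ = N_r I`, the matrices `N_s⁻¹ Aᴴ` and `N_r⁻¹ B D⁻¹` are a left
inverse of `A` and a right inverse of `Bᴴ`. Hence the proposed `L†` is a left inverse of
`L(X) = A X Bᴴ`, which in particular makes `L` injective.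
-/

namespace Matrix

theorem diagonal_mul_diagonal_inv_of_ne_zero {n K : Type*} [Fintype n] [DecidableEq n]
    [DivisionRing K] {v : n → K} (hv : ∀ i, v i ≠ 0) :
    diagonal v * diagonal (fun i => (v i)⁻¹) = 1 := by
  rw [diagonal_mul_diagonal, ← diagonal_one]
  exact congrArg diagonal (funext fun i => mul_inv_cancel₀ (hv i))

theorem mul_mul_mul_mul_eq_smul_of_mul_eq_smul_one {R m n k l : Type*} [CommSemiring R]
    [Fintype m] [Fintype n] [Fintype k] [Fintype l] [DecidableEq n] [DecidableEq k]
    {P : Matrix n m R} {A : Matrix m n R} {C : Matrix k l R} {Q : Matrix l k R} {a b : R}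
    (hPA : P * A = a • 1) (hCQ : C * Q = b • 1) (X : Matrix n k R) :
    P * (A * X * C) * Q = (a * b) • X := by
  calc P * (A * X * C) * Q = (P * A) * X * (C * Q) := by simp only [Matrix.mul_assoc]
    _ = (a * b) • X := by
      rw [hPA, hCQ, smul_mul, Matrix.one_mul, Matrix.mul_smul, Matrix.mul_one, smul_smul,
        mul_comm]

theorem smul_mul_mul_mul_mul_eq_self_of_mul_eq_smul_one {K m n k l : Type*} [Field K]
    [Fintype m] [Fintype n] [Fintype k] [Fintype l] [DecidableEq n] [DecidableEq k]
    {P : Matrix n m K} {A : Matrix m n K} {C : Matrix k l K} {Q : Matrix l k K} {a b : K}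
    (hPA : P * A = a • 1) (hCQ : C * Q = b • 1) (hab : a * b ≠ 0) (X : Matrix n k K) :
    (1 / (a * b)) • (P * (A * X * C) * Q) = X := by
  rw [mul_mul_mul_mul_eq_smul_of_mul_eq_smul_one hPA hCQ, one_div, inv_smul_smul₀ hab]

end Matrix

open Matrix in
theorem stmt7 (K Ns Nr : ℕ) (hNs : 2 * K + 1 ≤ Ns) (hNr : 2 * K + 1 ≤ Nr)
    (A : Matrix (Fin Ns) (Fin (2 * K + 1)) ℂ) (B : Matrix (Fin Nr) (Fin (2 * K + 1)) ℂ)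
    (d : Fin (2 * K + 1) → ℂ) (hd : ∀ n, d n ≠ 0)
    (hA : A.conjTranspose * A = (Ns : ℂ) • (1 : Matrix (Fin (2 * K + 1)) (Fin (2 * K + 1)) ℂ))
    (hB : B.conjTranspose * B =
      (Nr : ℂ) • Matrix.diagonal (fun n => ((‖d n‖ ^ 2 : ℝ) : ℂ))) :
    Function.Injective
      (fun X : Matrix (Fin (2 * K + 1)) (Fin (2 * K + 1)) ℂ => A * X * B.conjTranspose) ∧
    ∀ X : Matrix (Fin (2 * K + 1)) (Fin (2 * K + 1)) ℂ,
      (1 / ((Ns : ℂ) * (Nr : ℂ))) •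
        (A.conjTranspose * (A * X * B.conjTranspose) * B *
          Matrix.diagonal (fun n => (((‖d n‖ ^ 2 : ℝ) : ℂ))⁻¹)) = X := by
  have hNs0 : (Ns : ℂ) ≠ 0 := Nat.cast_ne_zero.mpr (by omega)
  have hNr0 : (Nr : ℂ) ≠ 0 := Nat.cast_ne_zero.mpr (by omega)
  have hnormSq : ∀ n, ((‖d n‖ ^ 2 : ℝ) : ℂ) ≠ 0 := fun n => by
    exact_mod_cast pow_ne_zero 2 (norm_ne_zero_iff.mpr (hd n))
  have hBD : B.conjTranspose * (B * diagonal (fun n => (((‖d n‖ ^ 2 : ℝ) : ℂ))⁻¹)) =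
      (Nr : ℂ) • 1 := by
    rw [← Matrix.mul_assoc, hB, smul_mul, diagonal_mul_diagonal_inv_of_ne_zero hnormSq]
  have hleftInv : Function.LeftInverse
      (fun V => (1 / ((Ns : ℂ) * (Nr : ℂ))) •
        (A.conjTranspose * V * B * diagonal (fun n => (((‖d n‖ ^ 2 : ℝ) : ℂ))⁻¹)))
      (fun X => A * X * B.conjTranspose) := fun X => by
    simpa only [Matrix.mul_assoc] using
      smul_mul_mul_mul_mul_eq_self_of_mul_eq_smul_one hA hBD (mul_ne_zero hNs0 hNr0) X
  exact ⟨hleftInv.injective, hleftInv⟩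
end

section
/- Let C > 1 and C_R > 0 with C²·C_R < 1. Suppose |W_{mn}| ≤ C^{|m|+|n|}/(|m|^{|m|}|n|^{|n|}) for all m,n ∈ ℤ, and |H_n| ≤ M·((C_R|n|)^{|n|} + (C_R|n|)^{−|n|}) for some M > 0 and all n ≠ 0, with |H_0| ≤ M'. Then there exists a constant C' such that for all sufficiently large K (K > C/(C_R e)), the tail sum ∑_{|m| ≤ K, |n| > K} |W_{mn}|·|H_n| ≤ C'·(C² C_R)^K. -/
/-!
For `b = |n| > K` the bounds on `W` and `H` factor as
`C^|m| / |m|^|m| * ((C C_R)^b + (C / (C_R b²))^b)`. With `q = C² C_R`, the first summand is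
at most `q^b` because `C > 1`. For the second, `K > C / (C_R e)` gives `C / (C_R b²) ≤ e / b`,
and `(e / b)^b = ((e / q) / b)^b q^b ≤ exp (e / q) q^b` since `(x / b)^b ≤ x^b / b! ≤ exp x`.
So the sum over `|n| > K` is a geometric tail, `O(q^(K+1))`, while
`∑ₘ C^|m| / |m|^|m| ≤ 2 exp C` uniformly in `K`.
-/

open Real Finset
open scoped Nat

lemma div_pow_self_le_exp {x : ℝ} (hx : 0 ≤ x) (n : ℕ) : (x / n) ^ n ≤ exp x :=
  calc (x / n) ^ n = x ^ n / (n : ℝ) ^ n := div_pow x n n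
    _ ≤ x ^ n / n ! :=
      div_le_div_of_nonneg_left (pow_nonneg hx n) (by positivity) (mod_cast n.factorial_le_pow)
    _ ≤ exp x := pow_div_factorial_le_exp x hx n

lemma sum_Icc_natAbs_le (g : ℕ → ℝ) (hg : 0 ≤ g) (K : ℕ) :
    ∑ m ∈ Icc (-(K : ℤ)) K, g m.natAbs ≤ 2 * ∑ j ∈ range (K + 1), g j := by
  let signed : Bool × ℕ → ℤ := fun p => if p.1 then p.2 else -p.2
  have hcover : Icc (-(K : ℤ)) K ⊆ (univ ×ˢ range (K + 1)).image signed := by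
    intro m hm
    simp only [mem_Icc] at hm
    simp only [mem_image, mem_product, mem_univ, mem_range, true_and, Prod.exists]
    rcases le_or_gt 0 m with h | h
    · exact ⟨true, m.toNat, by omega, by simp [signed]; omega⟩
    · exact ⟨false, m.natAbs, by omega, by simp [signed, abs_of_neg h]⟩
  calc ∑ m ∈ Icc (-(K : ℤ)) K, g m.natAbs
      ≤ ∑ m ∈ (univ ×ˢ range (K + 1)).image signed, g m.natAbs :=
        sum_le_sum_of_subset_of_nonneg hcover fun _ _ _ => hg _
    _ ≤ ∑ p ∈ univ ×ˢ range (K + 1), g (signed p).natAbs :=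
        sum_image_le_of_nonneg fun _ _ => hg _
    _ = 2 * ∑ j ∈ range (K + 1), g j := by
        rw [sum_product, Fintype.sum_bool]
        simp [signed, two_mul]

lemma sum_Icc_pow_div_pow_self_le {x : ℝ} (hx : 0 ≤ x) (K : ℕ) :
    ∑ m ∈ Icc (-(K : ℤ)) K, x ^ m.natAbs / (m.natAbs : ℝ) ^ m.natAbs ≤ 2 * exp x := by
  refine (sum_Icc_natAbs_le (fun j => x ^ j / (j : ℝ) ^ j) (fun j => by positivity) K).trans ?_
  gcongr
  calc ∑ j ∈ range (K + 1), x ^ j / (j : ℝ) ^ j ≤ ∑ j ∈ range (K + 1), x ^ j / j ! := by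
        gcongr with j
        exact_mod_cast j.factorial_le_pow
    _ ≤ exp x := sum_le_exp_of_nonneg hx _

lemma hasSum_bool_prod_snd {g : ℕ → ℝ} {a : ℝ} (h : HasSum g a) :
    HasSum (fun p : Bool × ℕ => g p.2) (2 * a) := by
  rw [← (Equiv.boolProdEquivSum ℕ).symm.hasSum_iff, two_mul]
  convert HasSum.sum (f := Sum.elim g g) h h
  ext (j | j) <;> rfl

section NatAbsTail

variable {f : ℕ → ℝ} (K : ℕ)

def signAndOffset (n : {n : ℤ // (K : ℤ) < |n|}) : Bool × ℕ :=
  (decide (0 < n.1), n.1.natAbs - (K + 1))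

lemma signAndOffset_injective : Function.Injective (signAndOffset K) := by
  rintro ⟨n, hn⟩ ⟨n', hn'⟩ h
  simp only [signAndOffset, Prod.mk.injEq, decide_eq_decide] at h
  rw [Int.abs_eq_natAbs] at hn hn'
  exact Subtype.ext (show n = n' by omega)

lemma comp_natAbs_eq_comp_signAndOffset :
    (fun n : {n : ℤ // (K : ℤ) < |n|} => f n.1.natAbs) =
      (fun p : Bool × ℕ => f (p.2 + (K + 1))) ∘ signAndOffset K := by
  ext ⟨n, hn⟩
  rw [Int.abs_eq_natAbs] at hn
  simp only [Function.comp_apply, signAndOffset]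
  congr 1
  omega

variable {K}

lemma summable_natAbs_gt (hf : Summable fun j => f (j + (K + 1))) :
    Summable fun n : {n : ℤ // (K : ℤ) < |n|} => f n.1.natAbs := by
  rw [comp_natAbs_eq_comp_signAndOffset]
  exact (hasSum_bool_prod_snd hf.hasSum).summable.comp_injective (signAndOffset_injective K)

lemma tsum_natAbs_gt_le (hf0 : 0 ≤ f) (hf : Summable fun j => f (j + (K + 1))) :
    ∑' n : {n : ℤ // (K : ℤ) < |n|}, f n.1.natAbs ≤ 2 * ∑' j, f (j + (K + 1)) := by
  rw [comp_natAbs_eq_comp_signAndOffset]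
  have h := hasSum_bool_prod_snd hf.hasSum
  exact (tsum_comp_le_tsum_of_inj h.summable (fun _ => hf0 _)
    (signAndOffset_injective K)).trans_eq h.tsum_eq

end NatAbsTail

lemma summable_pow_natAbs_gt {q : ℝ} (hq0 : 0 ≤ q) (hq1 : q < 1) (K : ℕ) :
    Summable fun n : {n : ℤ // (K : ℤ) < |n|} => q ^ n.1.natAbs :=
  summable_natAbs_gt <| by
    simpa only [pow_add] using (summable_geometric_of_lt_one hq0 hq1).mul_right _

lemma tsum_pow_natAbs_gt_le {q : ℝ} (hq0 : 0 ≤ q) (hq1 : q < 1) (K : ℕ) :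
    ∑' n : {n : ℤ // (K : ℤ) < |n|}, q ^ n.1.natAbs ≤ 2 * q / (1 - q) * q ^ K := by
  have hgeom : HasSum (fun j => q ^ (j + (K + 1))) (q ^ (K + 1) * (1 - q)⁻¹) := by
    simpa only [pow_add, mul_comm] using (hasSum_geometric_of_lt_one hq0 hq1).mul_left (q ^ (K + 1))
  refine (tsum_natAbs_gt_le (fun j => pow_nonneg hq0 j) hgeom.summable).trans_eq ?_
  rw [hgeom.tsum_eq, pow_succ]
  ring

lemma pow_div_pow_self_mul_add_inv_eq (C C_R : ℝ) {b : ℕ} (hb : b ≠ 0) :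
    C ^ b / (b : ℝ) ^ b * ((C_R * b) ^ (b : ℤ) + (C_R * b) ^ (-(b : ℤ))) =
      (C * C_R) ^ b + (C / (C_R * b ^ 2)) ^ b := by
  have : (b : ℝ) ≠ 0 := mod_cast hb
  rw [zpow_neg, zpow_natCast, mul_add]
  congr 1
  · rw [mul_pow, mul_pow]
    field_simp
  · rw [div_pow, mul_pow, mul_pow, sq, mul_pow]
    ring

lemma pow_div_pow_self_mul_add_inv_le {C C_R : ℝ} (hC : 1 ≤ C) (hCR : 0 < C_R) {b : ℕ}
    (hb : C / (C_R * exp 1) < b) :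
    C ^ b / (b : ℝ) ^ b * ((C_R * b) ^ (b : ℤ) + (C_R * b) ^ (-(b : ℤ))) ≤
      (1 + exp (exp 1 / (C ^ 2 * C_R))) * (C ^ 2 * C_R) ^ b := by
  set q := C ^ 2 * C_R
  have hq : 0 < q := by positivity
  have hb0 : (0 : ℝ) < b := lt_trans (by positivity) hb
  have hCb : C < b * (C_R * exp 1) := (div_lt_iff₀ (by positivity)).1 hb
  have hbase : C / (C_R * b ^ 2) ≤ exp 1 / b := by
    rw [div_le_div_iff₀ (by positivity) hb0]
    nlinarith
  rw [pow_div_pow_self_mul_add_inv_eq C C_R (by exact_mod_cast hb0.ne'), add_mul, one_mul]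
  gcongr ?_ + ?_
  · exact pow_le_pow_left₀ (by positivity) (by nlinarith) b
  · calc (C / (C_R * b ^ 2)) ^ b ≤ (exp 1 / b) ^ b := pow_le_pow_left₀ (by positivity) hbase b
      _ = (exp 1 / q / b) ^ b * q ^ b := by
        rw [← mul_pow]
        field_simp
      _ ≤ exp (exp 1 / q) * q ^ b := by
        gcongr
        exact div_pow_self_le_exp (by positivity) b

lemma tsum_le_of_le_mul_pow_natAbs {K : ℕ} {F : {n : ℤ // (K : ℤ) < |n|} → ℝ} {c q : ℝ}
    (hF0 : 0 ≤ F) (hc : 0 ≤ c) (hq0 : 0 ≤ q) (hq1 : q < 1)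
    (hF : ∀ n, F n ≤ c * q ^ n.1.natAbs) :
    ∑' n, F n ≤ c * (2 * q / (1 - q) * q ^ K) := by
  have hmaj := (summable_pow_natAbs_gt hq0 hq1 K).mul_left c
  calc ∑' n, F n ≤ ∑' n : {n : ℤ // (K : ℤ) < |n|}, c * q ^ n.1.natAbs :=
        (hmaj.of_nonneg_of_le hF0 hF).tsum_le_tsum hF hmaj
    _ = c * ∑' n : {n : ℤ // (K : ℤ) < |n|}, q ^ n.1.natAbs := tsum_mul_left
    _ ≤ c * (2 * q / (1 - q) * q ^ K) := by
        gcongr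
        exact tsum_pow_natAbs_gt_le hq0 hq1 K

lemma mul_le_of_le_weight_of_le_growth {C C_R M x y : ℝ} (hC : 1 ≤ C) (hCR : 0 < C_R)
    (hM : 0 ≤ M) {a b : ℕ} (hb : C / (C_R * exp 1) < b)
    (hx : x ≤ C ^ (a + b) / ((a : ℝ) ^ a * (b : ℝ) ^ b)) (hy0 : 0 ≤ y)
    (hy : y ≤ M * ((C_R * b) ^ (b : ℤ) + (C_R * b) ^ (-(b : ℤ)))) :
    x * y ≤
      M * (1 + exp (exp 1 / (C ^ 2 * C_R))) * (C ^ a / (a : ℝ) ^ a) * (C ^ 2 * C_R) ^ b := by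
  have hC0 : 0 ≤ C := zero_le_one.trans hC
  calc x * y ≤ (C ^ a / (a : ℝ) ^ a * (C ^ b / (b : ℝ) ^ b)) *
        (M * ((C_R * b) ^ (b : ℤ) + (C_R * b) ^ (-(b : ℤ)))) := by
        refine mul_le_mul (hx.trans_eq ?_) hy hy0 (by positivity)
        rw [pow_add, mul_div_mul_comm]
    _ = M * (C ^ a / (a : ℝ) ^ a) *
        (C ^ b / (b : ℝ) ^ b * ((C_R * b) ^ (b : ℤ) + (C_R * b) ^ (-(b : ℤ)))) := by ring
    _ ≤ M * (C ^ a / (a : ℝ) ^ a) * ((1 + exp (exp 1 / (C ^ 2 * C_R))) * (C ^ 2 * C_R) ^ b) :=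
        mul_le_mul_of_nonneg_left (pow_div_pow_self_mul_add_inv_le hC hCR hb) (by positivity)
    _ = _ := by ring

theorem stmt9_general (C C_R M : ℝ) (hC : 1 < C) (hCR : 0 < C_R) (hsmall : C ^ 2 * C_R < 1)
    (hM : 0 < M)
    (W : ℤ × ℤ → ℂ) (H : ℤ → ℂ)
    (hW : ∀ m n : ℤ, ‖W (m, n)‖ ≤
      C ^ (m.natAbs + n.natAbs) /
        ((m.natAbs : ℝ) ^ m.natAbs * (n.natAbs : ℝ) ^ n.natAbs))
    (hH : ∀ n : ℤ, n ≠ 0 → ‖H n‖ ≤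
      M * ((C_R * n.natAbs) ^ (n.natAbs : ℤ) + (C_R * n.natAbs) ^ (-(n.natAbs : ℤ)))) :
    ∃ C' > 0, ∀ K : ℕ, C / (C_R * Real.exp 1) < K →
      (∑ m ∈ Finset.Icc (-(K : ℤ)) (K : ℤ),
          ∑' n : {n : ℤ // (K : ℤ) < |n|},
            ‖W (m, n.1)‖ * ‖H n.1‖) ≤
        C' * (C ^ 2 * C_R) ^ K := by
  set q := C ^ 2 * C_R
  set A := 1 + exp (exp 1 / q)
  have hq1 : 0 < 1 - q := by linarith
  refine ⟨M * A * (2 * q / (1 - q)) * (2 * exp C), by positivity, fun K hK => ?_⟩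
  have hnatAbs (n : {n : ℤ // (K : ℤ) < |n|}) : K < n.1.natAbs := by
    have := n.2
    rw [Int.abs_eq_natAbs] at this
    omega
  have hinner (m : ℤ) : ∑' n : {n : ℤ // (K : ℤ) < |n|}, ‖W (m, n.1)‖ * ‖H n.1‖ ≤
      M * A * (C ^ m.natAbs / (m.natAbs : ℝ) ^ m.natAbs) * (2 * q / (1 - q) * q ^ K) :=
    tsum_le_of_le_mul_pow_natAbs (fun _ => by positivity) (by positivity) (by positivity) hsmall
      fun n => mul_le_of_le_weight_of_le_growth hC.le hCR hM.le
        (hK.trans (mod_cast hnatAbs n)) (hW m n) (norm_nonneg _)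
        (hH n (Int.natAbs_pos.mp (by have := hnatAbs n; omega)))
  calc _ ≤ ∑ m ∈ Icc (-(K : ℤ)) K,
          M * A * (C ^ m.natAbs / (m.natAbs : ℝ) ^ m.natAbs) * (2 * q / (1 - q) * q ^ K) :=
        sum_le_sum fun m _ => hinner m
    _ = M * A * (2 * q / (1 - q) * q ^ K) *
          ∑ m ∈ Icc (-(K : ℤ)) K, C ^ m.natAbs / (m.natAbs : ℝ) ^ m.natAbs := by
        rw [mul_sum]
        exact sum_congr rfl fun m _ => by ring
    _ ≤ M * A * (2 * q / (1 - q) * q ^ K) * (2 * exp C) := by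
        gcongr
        exact sum_Icc_pow_div_pow_self_le (by positivity) K
    _ = M * A * (2 * q / (1 - q)) * (2 * exp C) * q ^ K := by ring

theorem stmt9 (C C_R M M' : ℝ) (hC : 1 < C) (hCR : 0 < C_R) (hsmall : C ^ 2 * C_R < 1)
    (hM : 0 < M) (hM' : 0 < M')
    (W : ℤ × ℤ → ℂ) (H : ℤ → ℂ)
    (hW : ∀ m n : ℤ, ‖W (m, n)‖ ≤
      C ^ (m.natAbs + n.natAbs) /
        ((m.natAbs : ℝ) ^ m.natAbs * (n.natAbs : ℝ) ^ n.natAbs))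
    (hH : ∀ n : ℤ, n ≠ 0 → ‖H n‖ ≤
      M * ((C_R * n.natAbs) ^ (n.natAbs : ℤ) + (C_R * n.natAbs) ^ (-(n.natAbs : ℤ))))
    (hH0 : ‖H 0‖ ≤ M') :
    ∃ C' > 0, ∀ K : ℕ, C / (C_R * Real.exp 1) < K →
      (∑ m ∈ Finset.Icc (-(K : ℤ)) (K : ℤ),
          ∑' n : {n : ℤ // (K : ℤ) < |n|},
            ‖W (m, n.1)‖ * ‖H n.1‖) ≤
        C' * (C ^ 2 * C_R) ^ K :=
  stmt9_general C C_R M hC hCR hsmall hM W H hW hH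
end
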